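/- In U(gl(2|1))[[t]]: [H₂, T] = −(1/4)(T³ − T'), [H₂, T'] = −(1/4)(T'³ − T), [H₃, T] = (1/4)(T³ − T'), and [H₃, T'] = (1/4)(T'³ − T). -/

import Mathlib

/-!
Put `x = t e₁`, `g = √(1 + x²)`, so that `T = x + g` and `T' = -x + g` are power series in
`x`. Since `[h₂, e₁] = -e₁`, `[h₃, e₁] = e₁` and `[h₁, e₁] = 2 e₁`, taking the commutator with
`H₂` (resp. `H₃`) acts on power series in `x` as the derivation `∓(1 + x²) x d/dx`.
Differentiating `g² = 1 + x²` gives `(1 + x²) x g' = x² g`, after which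
`4 (1 + x²) x (±x + g)' = (±x + g)³ - (∓x + g)` is a polynomial identity in `x` and `g`
modulo `g² = 1 + x²`.
-/

noncomputable section

namespace SuperJordanian

open scoped BigOperators

/-- The generalized binomial coefficient `C(1/2, n)`. -/
def cHalf (n : ℕ) : ℂ :=
  (∏ i ∈ Finset.range n, ((1 : ℂ) / 2 - (i : ℂ))) / (n.factorial : ℂ)

/-- Parity for `gl(2|1)`: `p(i,j) = 1` iff exactly one of `i`, `j` equals the third index. -/
def par (i j : Fin 3) : ℕ :=
  if (i = 2 ∧ j ≠ 2) ∨ (i ≠ 2 ∧ j = 2) then 1 else 0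

/-- The generator `e_{ij}` in the free algebra. -/
def gen (i j : Fin 3) : FreeAlgebra ℂ (Fin 3 × Fin 3) := FreeAlgebra.ι ℂ (i, j)

/-- Defining relations of the enveloping algebra `U(gl(2|1))`:
`e_{ij} e_{kl} - (-1)^{p(i,j)p(k,l)} e_{kl} e_{ij}
  = δ_{jk} e_{il} - (-1)^{p(i,j)p(k,l)} δ_{li} e_{kj}`. -/
inductive Rel : FreeAlgebra ℂ (Fin 3 × Fin 3) → FreeAlgebra ℂ (Fin 3 × Fin 3) → Prop
  | mk (i j k l : Fin 3) :
      Rel (gen i j * gen k l - ((-1 : ℂ) ^ (par i j * par k l)) • (gen k l * gen i j))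
        ((if j = k then gen i l else 0)
          - ((-1 : ℂ) ^ (par i j * par k l)) • (if l = i then gen k j else 0))

/-- The enveloping algebra `U = U(gl(2|1))`. -/
abbrev U : Type := RingQuot Rel

/-- The image of `e_{ij}` in `U`. -/
def e (i j : Fin 3) : U := RingQuot.mkAlgHom ℂ Rel (gen i j)

/-- The formal power series ring `U[[t]]`. -/
abbrev V : Type := PowerSeries U

/-- The central formal variable `t`. -/
def tv : V := PowerSeries.X

/-- The inclusion `U → U[[t]]` as constant power series. -/
def C : U →+* V := PowerSeries.C

def e₁ : U := e 0 1
def f₁ : U := e 1 0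
def h₁ : U := e 0 0 - e 1 1
def e₂ : U := e 1 2
def f₂ : U := e 2 1
def h₂ : U := e 1 1 + e 2 2
def e₃ : U := e 0 2
def f₃ : U := e 2 0
def h₃ : U := h₁ + h₂

/-- `s = Σ_{n ≥ 0} C(1/2, n) t^{2n} e₁^{2n}`, so that `s² = 1 + t² e₁²`. -/
def s : V := PowerSeries.mk fun m => if m % 2 = 0 then cHalf (m / 2) • (e₁ ^ m) else 0

def T : V := tv * C e₁ + s
def T' : V := -(tv * C e₁) + s
def H₁ : V := s * C h₁
def F₁ : V := C f₁ - ((1 : ℂ) / 4) • (tv ^ 2 * C (e₁ * (h₁ ^ 2 - 1)))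
def H₂ : V := C h₂ - ((1 : ℂ) / 2) • (tv ^ 2 * C (e₁ ^ 2 * h₁))
def E₂ : V := C e₂ - ((1 : ℂ) / 4) • (tv ^ 2 * C (e₁ * e₃ * (2 * h₁ + 1)))
def F₂ : V := C f₂
def H₃ : V := C h₃ + ((1 : ℂ) / 2) • (tv ^ 2 * C (e₁ ^ 2 * h₁))
def E₃ : V := C e₃
def F₃ : V := C f₃ + ((1 : ℂ) / 4) • (tv ^ 2 * C (e₁ * f₂ * (2 * h₁ + 1)))

/-- Commutator `[a, b] = ab - ba`. -/
def br (a b : V) : V := a * b - b * a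

/-- Anticommutator `{a, b} = ab + ba`. -/
def ac (a b : V) : V := a * b + b * a

end SuperJordanian

theorem mul_pow_eq_pow_mul_add_smul {R A : Type*} [CommSemiring R] [Semiring A] [Algebra R A]
    {u a : A} {c : R} (h : u * a = a * u + c • a) (n : ℕ) :
    u * a ^ n = a ^ n * u + ((n : R) * c) • a ^ n := by
  induction n with
  | zero => simp
  | succ n ih =>
    rw [pow_succ, ← mul_assoc, ih, add_mul, mul_assoc, h, smul_mul_assoc, mul_add, ← mul_assoc,
      mul_smul_comm, ← pow_succ, Nat.cast_succ]
    module

namespace PowerSeries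

section RescaleMap

variable {R A : Type*} [CommSemiring R]

/-- The substitution `X ↦ a X`; unlike `PowerSeries.rescale`, `A` need not be commutative. -/
def rescaleMap [Semiring A] [Algebra R A] (a : A) : R⟦X⟧ →ₐ[R] A⟦X⟧ where
  toFun f := mk fun n => coeff n f • a ^ n
  map_one' := by
    ext n
    rcases n with _ | n <;> simp [coeff_one]
  map_mul' f g := by
    ext n
    simp only [coeff_mk, coeff_mul, Finset.sum_smul]
    refine Finset.sum_congr rfl fun ij hij => ?_
    rw [Finset.HasAntidiagonal.mem_antidiagonal] at hij
    rw [smul_mul_smul_comm, ← pow_add, hij]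
  map_zero' := by ext; simp
  map_add' f g := by ext; simp [add_smul]
  commutes' r := by
    ext n
    rcases n with _ | n <;> simp [coeff_C, Algebra.algebraMap_eq_smul_one]

section Semiring

variable [Semiring A] [Algebra R A]

theorem coeff_rescaleMap (a : A) (f : R⟦X⟧) (n : ℕ) :
    coeff n (rescaleMap a f) = coeff n f • a ^ n := by
  simp [rescaleMap]

theorem rescaleMap_X (a : A) : rescaleMap a (X : R⟦X⟧) = X * C a := by
  ext n
  rcases n with _ | _ | n <;> simp [coeff_rescaleMap, coeff_X]

theorem C_mul_rescaleMap {u a : A} {c : R} (h : u * a = a * u + c • a) (f : R⟦X⟧) :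
    C u * rescaleMap a f = rescaleMap a f * C u + c • rescaleMap a (X * d⁄dX R f) := by
  ext n
  rcases n with _ | n
  · simp only [map_add, coeff_C_mul, coeff_mul_C, coeff_smul, coeff_rescaleMap, coeff_zero_X_mul,
      zero_smul, smul_zero, add_zero, pow_zero, mul_smul_comm, smul_mul_assoc, mul_one, one_mul]
  · simp only [map_add, coeff_C_mul, coeff_mul_C, coeff_smul, coeff_rescaleMap, coeff_succ_X_mul,
      coeff_derivative, mul_smul_comm, mul_pow_eq_pow_mul_add_smul h, smul_add, smul_mul_assoc,
      smul_smul]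
    congr 2
    push_cast
    ring

end Semiring

theorem commutator_rescaleMap_mul_C [Ring A] [Algebra R A] {u a : A} {c : R}
    (h : u * a = a * u + c • a) (g f : R⟦X⟧) :
    rescaleMap a g * C u * rescaleMap a f - rescaleMap a f * (rescaleMap a g * C u)
      = c • rescaleMap a (g * (X * d⁄dX R f)) := by
  have hgf : rescaleMap a g * rescaleMap a f = rescaleMap a f * rescaleMap a g := by
    rw [← map_mul, mul_comm, map_mul]
  rw [mul_assoc, C_mul_rescaleMap h, mul_add, ← mul_assoc, hgf, mul_assoc, mul_smul_comm,
    ← map_mul, add_sub_cancel_left]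

end RescaleMap

section SqrtOneAddXSq

variable {K : Type*} [Field K] [CharZero K]

variable (K) in
def sqrtOneAddXSq : K⟦X⟧ :=
  expand 2 two_ne_zero (binomialSeries K (2⁻¹ : K))

theorem sqrtOneAddXSq_sq : sqrtOneAddXSq K ^ 2 = 1 + X ^ 2 := by
  have h : binomialSeries K (2⁻¹ : K) ^ 2 = 1 + X := by
    rw [sq, ← binomialSeries_add, ← one_div, add_halves, ← Nat.cast_one, binomialSeries_nat,
      pow_one]
  rw [sqrtOneAddXSq, ← map_pow, h, map_add, map_one, expand_X]

theorem one_add_X_sq_mul_X_derivative {g : K⟦X⟧} (hg : g ^ 2 = 1 + X ^ 2) :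
    (1 + X ^ 2) * (X * d⁄dX K g) = X ^ 2 * g := by
  have hd : C (2 : K) * (g * d⁄dX K g) = C (2 : K) * X := by
    have := congrArg (d⁄dX K) hg
    simp only [Derivation.leibniz_pow, map_add, Derivation.map_one_eq_zero, derivative_X,
      nsmul_eq_mul, smul_eq_mul] at this
    rw [map_ofNat]
    linear_combination this
  have hgd : g * d⁄dX K g = X := mul_left_cancel₀ (by simp) hd
  rw [← hg]
  linear_combination (X * g) * hgd

theorem one_add_X_sq_mul_X_derivative_add {g y : K⟦X⟧} (hg : g ^ 2 = 1 + X ^ 2)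
    (hy : y = X ∨ y = -X) :
    (1 + X ^ 2) * (X * d⁄dX K (y + g)) = (1 / 4 : K) • ((y + g) ^ 3 - (-y + g)) := by
  have hdy : X * d⁄dX K y = y := by rcases hy with rfl | rfl <;> simp
  have hy2 : y ^ 2 = X ^ 2 := by rcases hy with rfl | rfl <;> ring
  have h4 : C (1 / 4 : K) * 4 = 1 := by
    rw [← map_ofNat C, ← map_mul, one_div_mul_cancel (by norm_num), map_one]
  rw [map_add, mul_add, hdy, mul_add, one_add_X_sq_mul_X_derivative hg, smul_eq_C_mul]
  linear_combination (-(1 + X ^ 2) * y - X ^ 2 * g) * h4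
    - C (1 / 4 : K) * ((3 * y + g) * hg + (y + 3 * g) * hy2)

end SqrtOneAddXSq

end PowerSeries

namespace SuperJordanian

open PowerSeries hiding C

theorem cHalf_eq_choose (n : ℕ) : cHalf n = Ring.choose (2⁻¹ : ℂ) n := by
  rw [Ring.choose_eq_smul, ← Polynomial.aeval_eq_smeval, Polynomial.aeval_def,
    ← Polynomial.eval_map, descPochhammer_map, descPochhammer_eval_eq_prod_range, cHalf,
    smul_eq_mul, one_div, div_eq_inv_mul]

theorem e_mul_e_of_par_mul_eq_zero {i j k l : Fin 3} (h : par i j * par k l = 0) :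
    e i j * e k l =
      e k l * e i j + (if j = k then e i l else 0) - (if l = i then e k j else 0) := by
  have hrel := RingQuot.mkAlgHom_rel ℂ (Rel.mk i j k l)
  simp only [h, pow_zero, one_smul, map_sub, map_mul, apply_ite (RingQuot.mkAlgHom ℂ Rel),
    map_zero] at hrel
  simp only [e]
  rw [add_sub_assoc, ← hrel]
  abel

theorem h₁_mul_e₁ : h₁ * e₁ = e₁ * h₁ + (2 : ℂ) • e₁ := by
  simp only [h₁, e₁, sub_mul, mul_sub,
    e_mul_e_of_par_mul_eq_zero (by decide : par 0 0 * par 0 1 = 0),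
    e_mul_e_of_par_mul_eq_zero (by decide : par 1 1 * par 0 1 = 0),
    Fin.reduceEq, ↓reduceIte, sub_zero, add_zero]
  module

theorem h₂_mul_e₁ : h₂ * e₁ = e₁ * h₂ + (-1 : ℂ) • e₁ := by
  simp only [h₂, e₁, add_mul, mul_add,
    e_mul_e_of_par_mul_eq_zero (by decide : par 1 1 * par 0 1 = 0),
    e_mul_e_of_par_mul_eq_zero (by decide : par 2 2 * par 0 1 = 0),
    Fin.reduceEq, ↓reduceIte, sub_zero, add_zero]
  module

theorem h₃_mul_e₁ : h₃ * e₁ = e₁ * h₃ + (1 : ℂ) • e₁ := by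
  rw [h₃, add_mul, mul_add, h₁_mul_e₁, h₂_mul_e₁]
  module

local notation "φ" => rescaleMap (R := ℂ) e₁

theorem tv_sq_mul_C_e₁_sq_mul_h₁ : tv ^ 2 * C (e₁ ^ 2 * h₁) = φ (X ^ 2) * C h₁ := by
  rw [map_pow, rescaleMap_X, (commute_X _).symm.mul_pow, C, map_mul, map_pow, ← mul_assoc, tv]

theorem br_H₂_rescaleMap (f : ℂ⟦X⟧) : br H₂ (φ f) = -φ ((1 + X ^ 2) * (X * d⁄dX ℂ f)) := by
  have hH₂ : H₂ = φ 1 * C h₂ - ((1 : ℂ) / 2) • (φ (X ^ 2) * C h₁) := by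
    rw [H₂, map_one, one_mul, tv_sq_mul_C_e₁_sq_mul_h₁]
  rw [hH₂, br, sub_mul, mul_sub, smul_mul_assoc, mul_smul_comm, sub_sub_sub_comm, ← smul_sub, C,
    commutator_rescaleMap_mul_C h₂_mul_e₁, commutator_rescaleMap_mul_C h₁_mul_e₁, smul_smul,
    ← map_smul, ← map_smul, ← map_sub, ← map_neg]
  congr 1
  rw [one_mul, add_mul, one_mul]
  module

theorem br_H₃_rescaleMap (f : ℂ⟦X⟧) : br H₃ (φ f) = φ ((1 + X ^ 2) * (X * d⁄dX ℂ f)) := by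
  have hH₃ : H₃ = φ 1 * C h₃ + ((1 : ℂ) / 2) • (φ (X ^ 2) * C h₁) := by
    rw [H₃, map_one, one_mul, tv_sq_mul_C_e₁_sq_mul_h₁]
  rw [hH₃, br, add_mul, mul_add, smul_mul_assoc, mul_smul_comm, add_sub_add_comm, ← smul_sub, C,
    commutator_rescaleMap_mul_C h₃_mul_e₁, commutator_rescaleMap_mul_C h₁_mul_e₁, smul_smul,
    ← map_smul, ← map_smul, ← map_add]
  congr 1
  rw [one_mul, add_mul, one_mul]
  module

theorem s_eq_rescaleMap : s = φ (sqrtOneAddXSq ℂ) := by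
  ext n
  rw [coeff_rescaleMap, sqrtOneAddXSq, coeff_expand, binomialSeries_coeff, s, coeff_mk]
  by_cases hn : n % 2 = 0
  · rw [if_pos hn, if_pos (Nat.dvd_of_mod_eq_zero hn), cHalf_eq_choose, smul_eq_mul, mul_one]
  · rw [if_neg hn, if_neg (fun h => hn (Nat.mod_eq_zero_of_dvd h)), zero_smul]

theorem T_eq_rescaleMap : T = φ (X + sqrtOneAddXSq ℂ) := by
  rw [T, map_add, ← s_eq_rescaleMap, rescaleMap_X, tv, C]

theorem T'_eq_rescaleMap : T' = φ (-X + sqrtOneAddXSq ℂ) := by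
  rw [T', map_add, map_neg, ← s_eq_rescaleMap, rescaleMap_X, tv, C]

theorem br_H₂_rescaleMap_add_sqrtOneAddXSq {y : ℂ⟦X⟧} (hy : y = X ∨ y = -X) :
    br H₂ (φ (y + sqrtOneAddXSq ℂ)) =
      -(((1 : ℂ) / 4) • (φ (y + sqrtOneAddXSq ℂ) ^ 3 - φ (-y + sqrtOneAddXSq ℂ))) := by
  rw [br_H₂_rescaleMap, one_add_X_sq_mul_X_derivative_add sqrtOneAddXSq_sq hy, map_smul, map_sub, map_pow]

theorem br_H₃_rescaleMap_add_sqrtOneAddXSq {y : ℂ⟦X⟧} (hy : y = X ∨ y = -X) :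
    br H₃ (φ (y + sqrtOneAddXSq ℂ)) =
      ((1 : ℂ) / 4) • (φ (y + sqrtOneAddXSq ℂ) ^ 3 - φ (-y + sqrtOneAddXSq ℂ)) := by
  rw [br_H₃_rescaleMap, one_add_X_sq_mul_X_derivative_add sqrtOneAddXSq_sq hy, map_smul, map_sub, map_pow]

/-- the commutators of `H₂`, `H₃` with `T`, `T'` in `U(gl(2|1))[[t]]`. -/
theorem statement4 :
    br H₂ T = -(((1 : ℂ) / 4) • (T ^ 3 - T')) ∧
    br H₂ T' = -(((1 : ℂ) / 4) • (T' ^ 3 - T)) ∧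
    br H₃ T = ((1 : ℂ) / 4) • (T ^ 3 - T') ∧
    br H₃ T' = ((1 : ℂ) / 4) • (T' ^ 3 - T) := by
  rw [T_eq_rescaleMap, T'_eq_rescaleMap]
  refine ⟨?_, ?_, ?_, ?_⟩
  · exact br_H₂_rescaleMap_add_sqrtOneAddXSq (Or.inl rfl)
  · simpa only [neg_neg] using br_H₂_rescaleMap_add_sqrtOneAddXSq (y := -X) (Or.inr rfl)
  · exact br_H₃_rescaleMap_add_sqrtOneAddXSq (Or.inl rfl)
  · simpa only [neg_neg] using br_H₃_rescaleMap_add_sqrtOneAddXSq (y := -X) (Or.inr rfl)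

end SuperJordanian
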